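/- arXiv:1605.02891 — 3 statements merged into one kernel-verified Lean document; each statement's English description precedes it below -/
import Mathlib

section
/- The class of (weak) bar 1-visibility graphs is closed under path-addition: if a finite simple graph G admits a bar 1-visibility representation, u and v are distinct vertices of G, and P is a path of length at least |V(G)|−1 from u to v whose internal vertices are new, then G ⊕ P ⊕ ∅ admits a bar 1-visibility representation. -/
/-- Points of the plane `ℝ²`. -/
abbrev Plane : Type := ℝ × ℝ

/-- The `i`-th vertex of a path from `a` to `b` whose internal vertices are
`w 0, …, w (t-1)` (so the path has length `t + 1`). -/
def chainVertex {α : Type*} (a b : α) {t : ℕ} (w : Fin t → α) (i : Fin (t + 2)) : α :=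
  if _h0 : (i : ℕ) = 0 then a
  else if _h1 : (i : ℕ) = t + 1 then b
  else w ⟨(i : ℕ) - 1, by have := i.isLt; omega⟩

/-- The edge set of a path from `a` to `b` through the internal vertices
`w 0, …, w (t-1)`. -/
def chainEdges {α : Type*} (a b : α) {t : ℕ} (w : Fin t → α) : Set (Sym2 α) :=
  {e | ∃ i : Fin (t + 1),
    e = s(chainVertex a b w (Fin.castSucc i), chainVertex a b w (Fin.succ i))}

/-- Path-addition `G ⊕ P ⊕ F`: the graph on `V ⊕ Fin t` obtained from `G` by adding an
internally vertex-disjoint path `P = (u, w₁, …, w_t, v)` with `t` new internal vertices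
together with a set `F` of supplementary edges. -/
def pathAdd {V : Type*} (G : SimpleGraph V) (u v : V) (t : ℕ)
    (F : Set (Sym2 (V ⊕ Fin t))) : SimpleGraph (V ⊕ Fin t) :=
  SimpleGraph.fromEdgeSet
    ((Sym2.map Sum.inl '' G.edgeSet)
      ∪ chainEdges (Sum.inl u) (Sum.inl v) (fun i => Sum.inr i)
      ∪ F)

/-- A valid supplementary edge set: every supplementary edge is a non-loop with at least
one endpoint among the internal vertices `w₁, …, w_t` of the added path. -/
def ValidSupp {V : Type*} {t : ℕ} (F : Set (Sym2 (V ⊕ Fin t))) : Prop :=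
  ∀ e ∈ F, ¬ e.IsDiag ∧ ∃ i : Fin t, Sum.inr i ∈ e

/-- The horizontal bar with x-range `[lo, hi]` at height `y`. -/
def hBar (lo hi y : ℝ) : Set Plane := Set.Icc lo hi ×ˢ ({y} : Set ℝ)

/-- A (weak) bar 1-visibility representation of `G`: each vertex gets a horizontal closed
bar, the bars being pairwise disjoint, and each edge `xy` a vertical line of sight with
one endpoint on the bar of `x` and the other on the bar of `y` whose interior intersects
the bars of at most one vertex other than `x` and `y`. -/
structure Bar1VisRep {V : Type*} (G : SimpleGraph V) where
  lo : V → ℝ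
  hi : V → ℝ
  yc : V → ℝ
  lo_le_hi : ∀ x : V, lo x ≤ hi x
  bars_disjoint : ∀ x y : V, x ≠ y →
    Disjoint (hBar (lo x) (hi x) (yc x)) (hBar (lo y) (hi y) (yc y))
  /-- the x-coordinate of the vertical line of sight chosen for each edge -/
  sight : Sym2 V → ℝ
  sight_on_bars : ∀ x y : V, G.Adj x y →
    sight s(x, y) ∈ Set.Icc (lo x) (hi x) ∧ sight s(x, y) ∈ Set.Icc (lo y) (hi y)
  sight_one_bar : ∀ x y : V, G.Adj x y →
    {z : V | z ≠ x ∧ z ≠ y ∧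
      ((({sight s(x, y)} : Set ℝ) ×ˢ Set.Ioo (min (yc x) (yc y)) (max (yc x) (yc y))) ∩
        hBar (lo z) (hi z) (yc z)).Nonempty}.Subsingleton

/-- A graph is a (weak) bar 1-visibility graph if it admits a bar 1-visibility
representation. -/
def IsBar1VisibilityGraph {V : Type*} (G : SimpleGraph V) : Prop :=
  Nonempty (Bar1VisRep G)

/-!
The bars are first widened so that each has an interior, and then vertical lines are chosen
inside bars where no line of sight runs. The new vertices become point bars on such a line, at
heights interleaved with those of the old bars crossing it (a "ladder"), so that each new line
of sight crosses at most one old bar; a line crosses at most `|V| - 2` old bars other than those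
of `u` and `v`, and there are `t ≥ |V| - 2` new vertices. If the bars of `u` and `v` overlap
horizontally, a single line through both carries the whole path. Otherwise the path runs down
from `u` along one line to a new bar below the whole drawing and up along a second line to `v`,
or the same way above the drawing; one of the two directions crosses at most `|V| - 2` bars in
all. For `t = 0` the new graph has at most two vertices, and stacking the bars represents any
graph on at most three vertices.
-/

open Set Filter Topology

/-! ### Lines of sight -/

lemma hBar_disjoint_iff {lo hi y lo' hi' y' : ℝ} :
    Disjoint (hBar lo hi y) (hBar lo' hi' y') ↔ Disjoint (Icc lo hi) (Icc lo' hi') ∨ y ≠ y' :=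
  disjoint_prod.trans (or_congr_right disjoint_singleton)

def BarMeetsSeg (lo hi y x y₁ y₂ : ℝ) : Prop :=
  x ∈ Icc lo hi ∧ y ∈ uIoo y₁ y₂

lemma barMeetsSeg_comm {lo hi y x y₁ y₂ : ℝ} :
    BarMeetsSeg lo hi y x y₁ y₂ ↔ BarMeetsSeg lo hi y x y₂ y₁ := by
  rw [BarMeetsSeg, BarMeetsSeg, uIoo_comm]

lemma barMeetsSeg_neg {lo hi y x y₁ y₂ : ℝ} :
    BarMeetsSeg lo hi (-y) x (-y₁) (-y₂) ↔ BarMeetsSeg lo hi y x y₁ y₂ := by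
  refine and_congr_right fun _ => ?_
  change -y ∈ Ioo (min (-y₁) (-y₂)) (max (-y₁) (-y₂)) ↔
    y ∈ Ioo (min y₁ y₂) (max y₁ y₂)
  simp only [mem_Ioo, min_neg_neg, max_neg_neg, neg_lt_neg_iff]
  tauto

lemma inter_hBar_nonempty_iff {x y₁ y₂ lo hi y : ℝ} :
    ((({x} : Set ℝ) ×ˢ Ioo (min y₁ y₂) (max y₁ y₂)) ∩ hBar lo hi y).Nonempty ↔
      BarMeetsSeg lo hi y x y₁ y₂ := by
  constructor
  · rintro ⟨⟨p₁, p₂⟩, ⟨rfl, hp₂⟩, hp₁, rfl⟩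
    exact ⟨hp₁, hp₂⟩
  · rintro ⟨hx, hy⟩
    exact ⟨(x, y), ⟨rfl, hy⟩, hx, rfl⟩

section SightLine

variable {W : Type*} {lo hi yc : W → ℝ} {s : ℝ} {x y : W}

def IsSightLine (lo hi yc : W → ℝ) (s : ℝ) (x y : W) : Prop :=
  s ∈ Icc (lo x) (hi x) ∧ s ∈ Icc (lo y) (hi y) ∧
    {z | BarMeetsSeg (lo z) (hi z) (yc z) s (yc x) (yc y)}.Subsingleton

lemma IsSightLine.symm (h : IsSightLine lo hi yc s x y) : IsSightLine lo hi yc s y x :=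
  ⟨h.2.1, h.1, by simpa only [barMeetsSeg_comm] using h.2.2⟩

lemma IsSightLine.of_sym2_eq {x' y' : W} (h : IsSightLine lo hi yc s x y)
    (he : s(x', y') = s(x, y)) : IsSightLine lo hi yc s x' y' := by
  rcases Sym2.eq_iff.1 he with ⟨rfl, rfl⟩ | ⟨rfl, rfl⟩
  · exact h
  · exact h.symm

lemma ne_left_of_barMeetsSeg {z : W} (h : BarMeetsSeg (lo z) (hi z) (yc z) s (yc x) (yc y)) :
    z ≠ x := by
  rintro rfl
  exact left_notMem_uIoo h.2

lemma ne_right_of_barMeetsSeg {z : W} (h : BarMeetsSeg (lo z) (hi z) (yc z) s (yc x) (yc y)) :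
    z ≠ y := by
  rintro rfl
  exact right_notMem_uIoo h.2

end SightLine

lemma Set.ncard_le_card_sub_two {V : Type*} [Fintype V] {s : Set V} {u v : V} (huv : u ≠ v)
    (hu : u ∉ s) (hv : v ∉ s) : s.ncard ≤ Fintype.card V - 2 :=
  calc s.ncard ≤ ({u, v}ᶜ : Set V).ncard :=
        Set.ncard_le_ncard fun z hz h => by rcases h with rfl | rfl <;> contradiction
    _ = Fintype.card V - 2 := by rw [Set.ncard_compl, Set.ncard_pair huv, Nat.card_eq_fintype_card]

namespace Bar1VisRep

section General

variable {W : Type*} {H : SimpleGraph W}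

/-- Since a bar never meets the open segment ending on it, it suffices to bound all the bars
met by a line of sight. -/
def mk' (lo hi yc : W → ℝ) (lo_le_hi : ∀ x, lo x ≤ hi x)
    (bars_disjoint : ∀ x y, x ≠ y →
      Disjoint (hBar (lo x) (hi x) (yc x)) (hBar (lo y) (hi y) (yc y)))
    (sight : Sym2 W → ℝ)
    (isSightLine : ∀ x y, H.Adj x y → IsSightLine lo hi yc (sight s(x, y)) x y) :
    Bar1VisRep H where
  lo := lo
  hi := hi
  yc := yc
  lo_le_hi := lo_le_hi
  bars_disjoint := bars_disjoint
  sight := sight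
  sight_on_bars x y h := ⟨(isSightLine x y h).1, (isSightLine x y h).2.1⟩
  sight_one_bar x y h := (isSightLine x y h).2.2.anti fun _ hz => inter_hBar_nonempty_iff.1 hz.2.2

variable (R : Bar1VisRep H)

lemma isSightLine {x y : W} (h : H.Adj x y) : IsSightLine R.lo R.hi R.yc (R.sight s(x, y)) x y := by
  refine ⟨(R.sight_on_bars x y h).1, (R.sight_on_bars x y h).2, (R.sight_one_bar x y h).anti ?_⟩
  intro z hz
  exact ⟨ne_left_of_barMeetsSeg hz, ne_right_of_barMeetsSeg hz, inter_hBar_nonempty_iff.2 hz⟩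

lemma eq_of_mem_of_yc_eq {z₁ z₂ : W} {c : ℝ} (h₁ : c ∈ Icc (R.lo z₁) (R.hi z₁))
    (h₂ : c ∈ Icc (R.lo z₂) (R.hi z₂)) (hy : R.yc z₁ = R.yc z₂) : z₁ = z₂ := by
  by_contra hne
  rcases hBar_disjoint_iff.1 (R.bars_disjoint z₁ z₂ hne) with h | h
  · exact Set.disjoint_left.1 h h₁ h₂
  · exact h hy

def flip : Bar1VisRep H :=
  mk' R.lo R.hi (fun z => -R.yc z) R.lo_le_hi
    (fun x y hxy => by
      rw [hBar_disjoint_iff, ne_eq, neg_inj, ← ne_eq, ← hBar_disjoint_iff]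
      exact R.bars_disjoint x y hxy)
    R.sight
    (fun x y h => by
      obtain ⟨hx, hy, hsub⟩ := R.isSightLine h
      exact ⟨hx, hy, by simpa only [barMeetsSeg_neg] using hsub⟩)

end General

end Bar1VisRep

lemma isBar1VisibilityGraph_of_card_le_three {W : Type*} [Fintype W] (H : SimpleGraph W)
    (h : Fintype.card W ≤ 3) : IsBar1VisibilityGraph H := by
  set yc : W → ℝ := fun x => (Fintype.equivFin W x : ℝ)
  refine ⟨Bar1VisRep.mk' (fun _ => 0) (fun _ => 1) yc (fun _ => zero_le_one)
    (fun x y hxy => hBar_disjoint_iff.2 (Or.inr ?_)) (fun _ => 0)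
    fun x y hxy => ⟨⟨le_rfl, zero_le_one⟩, ⟨le_rfl, zero_le_one⟩, ?_⟩⟩
  · exact fun he => hxy ((Fintype.equivFin W).injective (Fin.ext (Nat.cast_injective he)))
  · refine Set.ncard_le_one_iff_subsingleton.1
      ((Set.ncard_le_card_sub_two hxy.ne (fun hx => ?_) (fun hy => ?_)).trans (by omega))
    · exact ne_left_of_barMeetsSeg (lo := fun _ => 0) (hi := fun _ => 1) hx rfl
    · exact ne_right_of_barMeetsSeg (lo := fun _ => 0) (hi := fun _ => 1) hy rfl

/-! ### Widening the bars -/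

lemma eventually_add_lt_sub {a b : ℝ} (h : a < b) :
    ∀ᶠ ε in 𝓝 (0 : ℝ), a + ε < b - ε :=
  ((continuous_const.add continuous_id).tendsto' 0 a (by simp)).eventually_lt
    ((continuous_const.sub continuous_id).tendsto' 0 b (by simp)) h

namespace Bar1VisRep

variable {W : Type*} {H : SimpleGraph W} (R : Bar1VisRep H)

lemma hi_lt_lo_or_hi_lt_lo {x y : W} (hxy : x ≠ y) (hy : R.yc x = R.yc y) :
    R.hi x < R.lo y ∨ R.hi y < R.lo x := by
  rcases hBar_disjoint_iff.1 (R.bars_disjoint x y hxy) with h | h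
  · by_contra! hc
    have hx : max (R.lo x) (R.lo y) ∈ Icc (R.lo x) (R.hi x) :=
      ⟨le_max_left .., max_le (R.lo_le_hi x) hc.1⟩
    exact Set.disjoint_left.1 h hx ⟨le_max_right .., max_le hc.2 (R.lo_le_hi y)⟩
  · exact absurd hy h

lemma exists_widening_margin [Finite W] : ∃ ε > 0,
    (∀ x y, x ≠ y → R.yc x = R.yc y →
      R.hi x + ε < R.lo y - ε ∨ R.hi y + ε < R.lo x - ε) ∧
    ∀ e z, R.sight e ∉ Icc (R.lo z) (R.hi z) →
      R.sight e + ε < R.lo z - ε ∨ R.hi z + ε < R.sight e - ε := by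
  have hsep : ∀ p : W × W, ∀ᶠ ε in 𝓝 (0 : ℝ), p.1 ≠ p.2 → R.yc p.1 = R.yc p.2 →
      R.hi p.1 + ε < R.lo p.2 - ε ∨ R.hi p.2 + ε < R.lo p.1 - ε := by
    rintro ⟨x, y⟩
    by_cases h : x ≠ y ∧ R.yc x = R.yc y
    · rcases R.hi_lt_lo_or_hi_lt_lo h.1 h.2 with h' | h'
      · exact (eventually_add_lt_sub h').mono fun _ hε _ _ => Or.inl hε
      · exact (eventually_add_lt_sub h').mono fun _ hε _ _ => Or.inr hε
    · exact Eventually.of_forall fun _ h₁ h₂ => absurd ⟨h₁, h₂⟩ h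
  have hsight : ∀ p : Sym2 W × W, ∀ᶠ ε in 𝓝 (0 : ℝ),
      R.sight p.1 ∉ Icc (R.lo p.2) (R.hi p.2) →
        R.sight p.1 + ε < R.lo p.2 - ε ∨ R.hi p.2 + ε < R.sight p.1 - ε := by
    rintro ⟨e, z⟩
    by_cases h : R.sight e ∈ Icc (R.lo z) (R.hi z)
    · exact Eventually.of_forall fun _ h' => absurd h h'
    · rcases not_and_or.1 h with h' | h'
      · exact (eventually_add_lt_sub (not_le.1 h')).mono fun _ hε _ => Or.inl hε
      · exact (eventually_add_lt_sub (not_le.1 h')).mono fun _ hε _ => Or.inr hε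
  obtain ⟨ε, hε, h₁, h₂⟩ := (eventually_mem_nhdsWithin.and
    (((eventually_all.2 hsep).and (eventually_all.2 hsight)).filter_mono nhdsWithin_le_nhds) :
      ∀ᶠ ε in 𝓝[>] (0 : ℝ), _).exists
  exact ⟨ε, hε, fun x y => h₁ (x, y), fun e z => h₂ (e, z)⟩

lemma exists_lo_lt_hi [Finite W] (R : Bar1VisRep H) :
    ∃ R' : Bar1VisRep H, ∀ z, R'.lo z < R'.hi z := by
  obtain ⟨ε, hε, hsep, hsight⟩ := R.exists_widening_margin
  refine ⟨mk' (fun z => R.lo z - ε) (fun z => R.hi z + ε) R.yc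
    (fun z => by linarith [R.lo_le_hi z]) (fun x y hxy => ?_) R.sight fun x y h => ?_,
    fun z => by dsimp [mk']; linarith [R.lo_le_hi z]⟩
  · rw [hBar_disjoint_iff, or_iff_not_imp_right, not_not]
    intro hy
    rw [Set.disjoint_left]
    rintro p ⟨hp₁, hp₂⟩ ⟨hp₃, hp₄⟩
    rcases hsep x y hxy hy with h | h <;> linarith
  · obtain ⟨⟨hx₁, hx₂⟩, ⟨hy₁, hy₂⟩, hsub⟩ := R.isSightLine h
    refine ⟨⟨by linarith, by linarith⟩, ⟨by linarith, by linarith⟩, hsub.anti ?_⟩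
    rintro z ⟨⟨hz₁, hz₂⟩, hz⟩
    refine ⟨by_contra fun hn => ?_, hz⟩
    rcases hsight _ z hn with h' | h' <;> linarith

end Bar1VisRep

/-! ### Ladders -/

def IsLadder (B : Set ℝ) (h : ℕ → ℝ) (m : ℕ) : Prop :=
  StrictAnti h ∧ (∀ i, 0 < i → i < m → h i ∉ B) ∧
    ∀ i < m, (B ∩ Ioo (h (i + 1)) (h i)).Subsingleton

lemma StrictAnti.apply_notMem_uIoo {h : ℕ → ℝ} (hh : StrictAnti h) (i k : ℕ) :
    h k ∉ uIoo (h i) (h (i + 1)) := by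
  rw [uIoo_of_gt (hh (Nat.lt_succ_self i))]
  rintro ⟨h₁, h₂⟩
  have := hh.lt_iff_gt.1 h₁
  have := hh.lt_iff_gt.1 h₂
  omega

lemma exists_cut_below_max (B : Finset ℝ) {β α : ℝ} (hβα : β < α)
    (hB : ∀ b ∈ B, b ∈ Ioo β α) :
    ∃ γ ∈ Ioo β α, γ ∉ B ∧ (↑B ∩ Ioi γ : Set ℝ).Subsingleton ∧
      (B.filter (· < γ)).card ≤ B.card - 1 := by
  rcases B.eq_empty_or_nonempty with rfl | hne
  · exact ⟨(β + α) / 2, ⟨by linarith, by linarith⟩, by simp, by simp, by simp⟩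
  set M := B.max' hne
  set m := (insert β (B.erase M)).max' (Finset.insert_nonempty _ _)
  have hM : M ∈ B := B.max'_mem hne
  have hle : ∀ b ∈ B, b ≠ M → b ≤ m := fun b hb hbM =>
    Finset.le_max' _ _ (Finset.mem_insert_of_mem (Finset.mem_erase.2 ⟨hbM, hb⟩))
  have hβm : β ≤ m := Finset.le_max' _ _ (Finset.mem_insert_self _ _)
  have hmM : m < M := by
    have hm : m ∈ insert β (B.erase M) := Finset.max'_mem _ _
    rcases Finset.mem_insert.1 hm with h | h
    · rw [h]; exact (hB M hM).1
    · exact lt_of_le_of_ne (B.le_max' _ (Finset.mem_of_mem_erase h)) (Finset.ne_of_mem_erase h)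
  refine ⟨(m + M) / 2, ⟨by linarith, by linarith [(hB M hM).2]⟩, fun hγ => ?_, ?_, ?_⟩
  · by_cases hγM : (m + M) / 2 = M
    · linarith
    · linarith [hle _ hγ hγM]
  · have htop : ∀ b ∈ (↑B ∩ Ioi ((m + M) / 2) : Set ℝ), b = M := fun b ⟨hb, hbγ⟩ =>
      by_contra fun hbM => by linarith [hle b hb hbM, mem_Ioi.1 hbγ]
    exact fun a ha b hb => (htop a ha).trans (htop b hb).symm
  · calc (B.filter (· < (m + M) / 2)).card ≤ (B.erase M).card := by
          refine Finset.card_le_card fun b hb => ?_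
          rw [Finset.mem_filter] at hb
          exact Finset.mem_erase.2 ⟨fun hbM => by linarith [hbM ▸ hb.2], hb.1⟩
      _ = B.card - 1 := Finset.card_erase_of_mem hM

lemma exists_ladder_of_finset (k : ℕ) : ∀ (B : Finset ℝ) {β α : ℝ}, β < α →
    (∀ b ∈ B, b ∈ Ioo β α) → B.card ≤ k + 1 →
    ∃ h : ℕ → ℝ, h 0 = α ∧ h (k + 1) = β ∧ IsLadder B h (k + 1) := by
  induction k with
  | zero =>
    intro B β α hβα _ hcard
    refine ⟨fun i => α - i * (α - β), by simp, by simp, strictAnti_nat_of_succ_lt fun i => ?_,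
      fun i h₀ h₁ => by omega, fun i _ a ha b hb => Finset.card_le_one.1 hcard a ha.1 b hb.1⟩
    push_cast
    nlinarith
  | succ k ih =>
    intro B β α hβα hB hcard
    obtain ⟨γ, hγ, hγB, htop, hrest⟩ := exists_cut_below_max B hβα hB
    obtain ⟨h, h₀, hk, hanti, hnot, hsub⟩ := ih (B.filter (· < γ)) hγ.1
      (fun b hb => ⟨(hB b (Finset.mem_filter.1 hb).1).1, (Finset.mem_filter.1 hb).2⟩) (by omega)
    have hlow : ∀ i, (↑B ∩ Ioo (h (i + 1)) (h i) : Set ℝ) ⊆ ↑(B.filter (· < γ)) := by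
      intro i b ⟨hb, hbi⟩
      exact Finset.mem_filter.2 ⟨hb, hbi.2.trans_le (h₀ ▸ hanti.antitone (Nat.zero_le i))⟩
    refine ⟨fun i => match i with | 0 => α | i + 1 => h i, rfl, hk,
      strictAnti_nat_of_succ_lt ?_, ?_, ?_⟩
    · rintro (_ | i)
      · show h 0 < α
        exact h₀ ▸ hγ.2
      · exact hanti (Nat.lt_succ_self i)
    · rintro (_ | _ | i) h0 hi
      · omega
      · show h 0 ∉ (B : Set ℝ)
        exact h₀ ▸ hγB
      · intro hB'
        refine hnot (i + 1) (Nat.succ_pos i) (by omega) (Finset.mem_filter.2 ⟨hB', ?_⟩)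
        exact h₀ ▸ hanti (Nat.succ_pos i)
    · rintro (_ | i) hi
      · exact htop.anti fun b hb => ⟨hb.1, h₀ ▸ hb.2.1⟩
      · exact (hsub i (by omega)).anti fun b hb => ⟨hlow i hb, hb.2⟩

lemma exists_ladder (B : Set ℝ) {β α : ℝ} (hβα : β < α) {m : ℕ} (hm : 0 < m)
    (hfin : (B ∩ Ioo β α).Finite) (hcard : (B ∩ Ioo β α).ncard ≤ m) :
    ∃ h : ℕ → ℝ, h 0 = α ∧ h m = β ∧ IsLadder B h m := by
  obtain ⟨k, rfl⟩ : ∃ k, m = k + 1 := ⟨m - 1, by omega⟩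
  rw [Set.ncard_eq_toFinset_card _ hfin] at hcard
  obtain ⟨h, h₀, hk, hanti, hnot, hsub⟩ := exists_ladder_of_finset k hfin.toFinset hβα
    (fun b hb => (hfin.mem_toFinset.1 hb).2) hcard
  have hrange : ∀ i ≤ k + 1, h i ∈ Icc β α := fun i hi =>
    ⟨hk ▸ hanti.antitone hi, h₀ ▸ hanti.antitone (Nat.zero_le i)⟩
  refine ⟨h, h₀, hk, hanti, fun i h0 hi hB => ?_, fun i hi => ?_⟩
  · exact hnot i h0 hi (hfin.mem_toFinset.2 ⟨hB, hk ▸ hanti hi, h₀ ▸ hanti h0⟩)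
  · refine (hsub i hi).anti fun b ⟨hb, hbi⟩ => ⟨hfin.mem_toFinset.2 ⟨hb, ?_, ?_⟩, hbi⟩
    · exact (hrange (i + 1) hi).1.trans_lt hbi.1
    · exact hbi.2.trans_le (hrange i hi.le).2

/-! ### Representations of the extended graph from routes -/

lemma chainVertex_cases {α : Type*} (a b : α) {t : ℕ} (w : Fin t → α) (k : Fin (t + 2)) :
    ((k : ℕ) = 0 ∧ chainVertex a b w k = a) ∨
      ((k : ℕ) = t + 1 ∧ chainVertex a b w k = b) ∨
      ∃ j : Fin t, (k : ℕ) = j + 1 ∧ chainVertex a b w k = w j := by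
  unfold chainVertex
  split_ifs with h₀ h₁
  · exact Or.inl ⟨h₀, rfl⟩
  · exact Or.inr (Or.inl ⟨h₁, rfl⟩)
  · exact Or.inr (Or.inr ⟨_, by simp only; omega, rfl⟩)

open Classical in
/-- The position of a vertex of `pathAdd G u v t F` along the added path (meaningful on the
path only). -/
noncomputable def chainIndex {V : Type*} (u : V) (t : ℕ) : V ⊕ Fin t → ℕ :=
  Sum.elim (fun a => if a = u then 0 else t + 1) fun j => j + 1

lemma chainIndex_chainVertex {V : Type*} {u v : V} (huv : u ≠ v) {t : ℕ} (k : Fin (t + 2)) :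
    chainIndex u t (chainVertex (Sum.inl u) (Sum.inl v) (fun i => Sum.inr i) k) = k := by
  rcases chainVertex_cases (Sum.inl u) (Sum.inl v) (fun i => Sum.inr i) k with
    ⟨hk, he⟩ | ⟨hk, he⟩ | ⟨j, hk, he⟩ <;> rw [he] <;> simp [chainIndex, hk, huv.symm]

namespace Bar1VisRep

variable {V : Type*} {G : SimpleGraph V}

/-- Bars for the new vertices and lines of sight for the new edges of `pathAdd G u v t ∅`,
indexed by the position along the path `u = p 0, p 1, …, p t, p (t + 1) = v`: the new vertex
`p k` gets the bar `[lo k, hi k] × {yc k}` and the edge `p i p (i + 1)` is seen along the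
vertical line `x = col i`. -/
structure PathRoute (R : Bar1VisRep G) (u v : V) (t : ℕ) where
  lo : ℕ → ℝ
  hi : ℕ → ℝ
  yc : ℕ → ℝ
  col : ℕ → ℝ
  yc_zero : yc 0 = R.yc u
  yc_last : yc (t + 1) = R.yc v
  lo_le_hi : ∀ k, lo k ≤ hi k
  disjoint_new : ∀ j k, 1 ≤ j → j < k → k ≤ t →
    Disjoint (hBar (lo j) (hi j) (yc j)) (hBar (lo k) (hi k) (yc k))
  disjoint_old : ∀ k z, 1 ≤ k → k ≤ t →
    Disjoint (hBar (lo k) (hi k) (yc k)) (hBar (R.lo z) (R.hi z) (R.yc z))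
  col_zero_mem : col 0 ∈ Icc (R.lo u) (R.hi u)
  col_last_mem : col t ∈ Icc (R.lo v) (R.hi v)
  col_mem : ∀ k, 1 ≤ k → k ≤ t →
    col (k - 1) ∈ Icc (lo k) (hi k) ∧ col k ∈ Icc (lo k) (hi k)
  not_meets_new : ∀ i k, i ≤ t → 1 ≤ k → k ≤ t →
    ¬ BarMeetsSeg (lo k) (hi k) (yc k) (col i) (yc i) (yc (i + 1))
  meets_old_subsingleton : ∀ i ≤ t,
    {z | BarMeetsSeg (R.lo z) (R.hi z) (R.yc z) (col i) (yc i) (yc (i + 1))}.Subsingleton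
  not_meets_sight : ∀ a b, G.Adj a b → ∀ k, 1 ≤ k → k ≤ t →
    ¬ BarMeetsSeg (lo k) (hi k) (yc k) (R.sight s(a, b)) (R.yc a) (R.yc b)

namespace PathRoute

variable {R : Bar1VisRep G} {u v : V} {t : ℕ} (ρ : R.PathRoute u v t)

def barLo : V ⊕ Fin t → ℝ := Sum.elim R.lo fun j => ρ.lo (j + 1)

def barHi : V ⊕ Fin t → ℝ := Sum.elim R.hi fun j => ρ.hi (j + 1)

def barYc : V ⊕ Fin t → ℝ := Sum.elim R.yc fun j => ρ.yc (j + 1)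

noncomputable def sightFn : V ⊕ Fin t → V ⊕ Fin t → ℝ
  | .inl a, .inl b => R.sight s(a, b)
  | x, y => ρ.col (min (chainIndex u t x) (chainIndex u t y))

lemma sightFn_comm (x y : V ⊕ Fin t) : ρ.sightFn x y = ρ.sightFn y x := by
  rcases x with a | j <;> rcases y with b | k <;> simp [sightFn, Sym2.eq_swap, min_comm]

noncomputable def sight : Sym2 (V ⊕ Fin t) → ℝ :=
  Sym2.lift ⟨ρ.sightFn, ρ.sightFn_comm⟩

local notation "p" => chainVertex (Sum.inl u) (Sum.inl v) (fun i => Sum.inr i)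

lemma barYc_chainVertex (k : Fin (t + 2)) : ρ.barYc (p k) = ρ.yc k := by
  rcases chainVertex_cases (Sum.inl u) (Sum.inl v) (fun i => Sum.inr i) k with
    ⟨hk, he⟩ | ⟨hk, he⟩ | ⟨j, hk, he⟩ <;> rw [he, hk]
  · exact ρ.yc_zero.symm
  · exact ρ.yc_last.symm
  · rfl

lemma col_mem_chainVertex (i : Fin (t + 1)) :
    ρ.col i ∈ Icc (ρ.barLo (p i.castSucc)) (ρ.barHi (p i.castSucc)) ∧
      ρ.col i ∈ Icc (ρ.barLo (p i.succ)) (ρ.barHi (p i.succ)) := by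
  constructor
  · rcases chainVertex_cases (Sum.inl u) (Sum.inl v) (fun i => Sum.inr i) i.castSucc with
      ⟨hk, he⟩ | ⟨hk, he⟩ | ⟨j, hk, he⟩ <;>
      rw [he] <;> simp only [Fin.val_castSucc] at hk
    · rw [hk]
      exact ρ.col_zero_mem
    · omega
    · rw [hk]
      exact (ρ.col_mem (j + 1) (by omega) (by omega)).2
  · rcases chainVertex_cases (Sum.inl u) (Sum.inl v) (fun i => Sum.inr i) i.succ with
      ⟨hk, he⟩ | ⟨hk, he⟩ | ⟨j, hk, he⟩ <;> rw [he] <;> simp only [Fin.val_succ] at hk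
    · omega
    · rw [show (i : ℕ) = t by omega]
      exact ρ.col_last_mem
    · rw [show (i : ℕ) = j by omega]
      have := (ρ.col_mem (j + 1) (by omega) (by omega)).1
      rwa [Nat.add_sub_cancel] at this

lemma sight_chainVertex (huv : u ≠ v) (ht : 1 ≤ t) (i : Fin (t + 1)) :
    ρ.sight s(p i.castSucc, p i.succ) = ρ.col i := by
  change ρ.sightFn (p i.castSucc) (p i.succ) = ρ.col i
  have h₁ := chainIndex_chainVertex huv i.castSucc
  have h₂ := chainIndex_chainVertex huv i.succ
  rcases chainVertex_cases (Sum.inl u) (Sum.inl v) (fun i => Sum.inr i) i.castSucc with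
      ⟨hk, he⟩ | ⟨hk, he⟩ | ⟨j, hk, he⟩ <;>
    rcases chainVertex_cases (Sum.inl u) (Sum.inl v) (fun i => Sum.inr i) i.succ with
      ⟨hk', he'⟩ | ⟨hk', he'⟩ | ⟨j', hk', he'⟩ <;>
    simp only [Fin.val_castSucc, Fin.val_succ] at hk hk' h₁ h₂ <;>
    first
      | omega
      | (simp only [he, he'] at h₁ h₂ ⊢
         simp only [sightFn, h₁, h₂, min_eq_left (Nat.le_succ _)])

lemma isSightLine_old {a b : V} (hab : G.Adj a b) :
    IsSightLine ρ.barLo ρ.barHi ρ.barYc (R.sight s(a, b)) (Sum.inl a) (Sum.inl b) := by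
  refine ⟨(R.sight_on_bars a b hab).1, (R.sight_on_bars a b hab).2,
    ((R.isSightLine hab).2.2.image Sum.inl).anti ?_⟩
  rintro (w | j) hz
  · exact ⟨w, hz, rfl⟩
  · exact absurd hz (ρ.not_meets_sight a b hab (j + 1) (by omega) (by omega))

lemma isSightLine_chainVertex (i : Fin (t + 1)) :
    IsSightLine ρ.barLo ρ.barHi ρ.barYc (ρ.col i) (p i.castSucc) (p i.succ) := by
  refine ⟨(ρ.col_mem_chainVertex i).1, (ρ.col_mem_chainVertex i).2, ?_⟩
  rw [barYc_chainVertex, barYc_chainVertex, Fin.val_castSucc, Fin.val_succ]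
  refine ((ρ.meets_old_subsingleton i (by omega)).image Sum.inl).anti ?_
  rintro (w | j) hz
  · exact ⟨w, hz, rfl⟩
  · exact absurd hz (ρ.not_meets_new i (j + 1) (by omega) (by omega) (by omega))

theorem isBar1VisibilityGraph (ρ : R.PathRoute u v t) (huv : u ≠ v) (ht : 1 ≤ t) :
    IsBar1VisibilityGraph (pathAdd G u v t ∅) := by
  refine ⟨mk' ρ.barLo ρ.barHi ρ.barYc (Sum.rec R.lo_le_hi fun j => ρ.lo_le_hi _) ?_ ρ.sight
    ?_⟩
  · rintro (a | j) (b | k) hne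
    · exact R.bars_disjoint a b fun h => hne (congrArg _ h)
    · exact (ρ.disjoint_old (k + 1) a (by omega) (by omega)).symm
    · exact ρ.disjoint_old (j + 1) b (by omega) (by omega)
    · have hjk : (j : ℕ) ≠ k := fun h => hne (congrArg _ (Fin.ext h))
      rcases lt_or_gt_of_ne hjk with h | h
      · exact ρ.disjoint_new (j + 1) (k + 1) (by omega) (by omega) (by omega)
      · exact (ρ.disjoint_new (k + 1) (j + 1) (by omega) (by omega) (by omega)).symm
  · intro x y hxy
    rw [pathAdd, SimpleGraph.fromEdgeSet_adj, Set.union_empty] at hxy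
    obtain ⟨⟨e, he, hmap⟩ | ⟨i, hi⟩, -⟩ := hxy
    · induction e using Sym2.ind with
      | h a b =>
        rw [Sym2.map_mk] at hmap
        rw [← hmap]
        exact (ρ.isSightLine_old he).of_sym2_eq hmap.symm
    · rw [hi, ρ.sight_chainVertex huv ht]
      exact (ρ.isSightLine_chainVertex i).of_sym2_eq hi

end PathRoute

end Bar1VisRep

/-! ### Routes along vertical lines -/

namespace Bar1VisRep

variable {V : Type*} {G : SimpleGraph V} (R : Bar1VisRep G)

lemma exists_fresh_col [Finite V] {a b : ℝ} (hab : a < b) :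
    ∃ c ∈ Ioo a b, c ∉ range R.sight :=
  ((Ioo_infinite hab).sdiff (finite_range R.sight)).nonempty

def colHeights (c : ℝ) : Set ℝ := R.yc '' {z | c ∈ Icc (R.lo z) (R.hi z)}

lemma finite_colHeights [Finite V] (c : ℝ) : (R.colHeights c).Finite :=
  (finite_range R.yc).subset (image_subset_range _ _)

def below (c : ℝ) (x : V) : Set V := {z | c ∈ Icc (R.lo z) (R.hi z) ∧ R.yc z < R.yc x}

lemma ncard_colHeights_inter_le [Finite V] {c β α : ℝ} {s : Set V}
    (hs : ∀ z, c ∈ Icc (R.lo z) (R.hi z) → R.yc z ∈ Ioo β α → z ∈ s) :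
    (R.colHeights c ∩ Ioo β α).ncard ≤ s.ncard := by
  refine (Set.ncard_le_ncard ?_).trans (Set.ncard_image_le (f := R.yc))
  rintro _ ⟨⟨z, hz, rfl⟩, hα⟩
  exact ⟨z, hs z hz hα, rfl⟩

lemma ncard_below_add_ncard_flip_below_le [Fintype V] {c : ℝ} {x w : V} (hxw : x ≠ w)
    (hw : c ∉ Icc (R.lo w) (R.hi w)) :
    (R.below c x).ncard + (R.flip.below c x).ncard ≤ Fintype.card V - 2 := by
  have hdisj : Disjoint (R.below c x) (R.flip.below c x) :=
    Set.disjoint_left.2 fun z h₁ h₂ => (lt_asymm h₁.2 (neg_lt_neg_iff.1 h₂.2))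
  rw [← Set.ncard_union_eq hdisj]
  refine Set.ncard_le_card_sub_two hxw (fun h => ?_) (fun h => ?_)
  · rcases h with h | h
    · exact lt_irrefl _ h.2
    · exact lt_irrefl _ h.2
  · rcases h with h | h
    · exact hw h.1
    · exact hw h.1

lemma meets_subsingleton_of_isLadder {c : ℝ} {h : ℕ → ℝ} {m : ℕ}
    (hl : IsLadder (R.colHeights c) h m) {i : ℕ} (hi : i < m) :
    {z | BarMeetsSeg (R.lo z) (R.hi z) (R.yc z) c (h i) (h (i + 1))}.Subsingleton := by
  intro z₁ hz₁ z₂ hz₂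
  rw [mem_ofPred_eq, BarMeetsSeg, uIoo_of_gt (hl.1 (Nat.lt_succ_self i))] at hz₁ hz₂
  exact R.eq_of_mem_of_yc_eq hz₁.1 hz₂.1
    (hl.2.2 i hi ⟨⟨z₁, hz₁.1, rfl⟩, hz₁.2⟩ ⟨⟨z₂, hz₂.1, rfl⟩, hz₂.2⟩)

lemma disjoint_hBar_of_isLadder {c : ℝ} {h : ℕ → ℝ} {m : ℕ}
    (hl : IsLadder (R.colHeights c) h m) {i : ℕ} (h0 : 0 < i) (hi : i < m) (z : V) :
    Disjoint (hBar c c (h i)) (hBar (R.lo z) (R.hi z) (R.yc z)) := by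
  by_cases hz : c ∈ Icc (R.lo z) (R.hi z)
  · exact hBar_disjoint_iff.2 (Or.inr fun he => hl.2.1 i h0 hi ⟨z, hz, he.symm⟩)
  · exact hBar_disjoint_iff.2 (Or.inl (by rwa [Icc_self, disjoint_singleton_left]))

def columnRoute {u v : V} {t : ℕ} {c : ℝ} (hcu : c ∈ Icc (R.lo u) (R.hi u))
    (hcv : c ∈ Icc (R.lo v) (R.hi v)) (hc : c ∉ range R.sight) {h : ℕ → ℝ}
    (h0 : h 0 = R.yc u) (hlast : h (t + 1) = R.yc v) (hl : IsLadder (R.colHeights c) h (t + 1)) :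
    R.PathRoute u v t where
  lo _ := c
  hi _ := c
  yc := h
  col _ := c
  yc_zero := h0
  yc_last := hlast
  lo_le_hi _ := le_rfl
  disjoint_new _ _ _ hjk _ := hBar_disjoint_iff.2 (Or.inr (hl.1 hjk).ne')
  disjoint_old k z hk hkt := R.disjoint_hBar_of_isLadder hl hk (by omega) z
  col_zero_mem := hcu
  col_last_mem := hcv
  col_mem _ _ _ := ⟨left_mem_Icc.2 le_rfl, left_mem_Icc.2 le_rfl⟩
  not_meets_new i k _ _ _ hm := hl.1.apply_notMem_uIoo i k hm.2
  meets_old_subsingleton _ hi := R.meets_subsingleton_of_isLadder hl (by omega)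
  not_meets_sight a b _ _ _ _ hm := hc ⟨s(a, b), le_antisymm hm.1.2 hm.1.1⟩

lemma isBar1VisibilityGraph_pathAdd_of_column [Fintype V] {u v : V} (huv : u ≠ v) {t : ℕ}
    (ht : 1 ≤ t) (htV : Fintype.card V ≤ t + 2) {c : ℝ} (hcu : c ∈ Icc (R.lo u) (R.hi u))
    (hcv : c ∈ Icc (R.lo v) (R.hi v)) (hc : c ∉ range R.sight) (hvu : R.yc v < R.yc u) :
    IsBar1VisibilityGraph (pathAdd G u v t ∅) := by
  have hcard : (R.colHeights c ∩ Ioo (R.yc v) (R.yc u)).ncard ≤ t + 1 := by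
    refine (R.ncard_colHeights_inter_le (s := {z | R.yc z ∈ Ioo (R.yc v) (R.yc u)})
      fun z _ hz => hz).trans ((Set.ncard_le_card_sub_two huv ?_ ?_).trans (by omega))
    · exact fun h => lt_irrefl _ h.2
    · exact fun h => lt_irrefl _ h.1
  obtain ⟨h, h0, hlast, hl⟩ :=
    exists_ladder (R.colHeights c) hvu (Nat.succ_pos t)
      ((R.finite_colHeights c).inter_of_left _) hcard
  exact (R.columnRoute hcu hcv hc h0 hlast hl).isBar1VisibilityGraph huv ht


section FloorRoute

variable {p t : ℕ} {cu cv : ℝ} {i k : ℕ}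

def floorCol (p : ℕ) (cu cv : ℝ) (i : ℕ) : ℝ := if i < p then cu else cv

lemma floorCol_of_lt (h : i < p) : floorCol p cu cv i = cu := if_pos h

lemma floorCol_of_le (h : p ≤ i) : floorCol p cu cv i = cv := if_neg (not_lt.2 h)

/-- The `k`-th bar spans the lines of sight of the two path edges at it. -/
def floorLo (p : ℕ) (cu cv : ℝ) (k : ℕ) : ℝ :=
  min (floorCol p cu cv (k - 1)) (floorCol p cu cv k)

def floorHi (p : ℕ) (cu cv : ℝ) (k : ℕ) : ℝ :=
  max (floorCol p cu cv (k - 1)) (floorCol p cu cv k)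

lemma floorLo_floorHi_of_lt (h : k < p) : floorLo p cu cv k = cu ∧ floorHi p cu cv k = cu := by
  simp only [floorLo, floorHi, floorCol_of_lt h, floorCol_of_lt (show k - 1 < p by omega),
    min_self, max_self, and_self]

lemma floorLo_floorHi_of_gt (h : p < k) : floorLo p cu cv k = cv ∧ floorHi p cu cv k = cv := by
  simp only [floorLo, floorHi, floorCol_of_le h.le, floorCol_of_le (show p ≤ k - 1 by omega),
    min_self, max_self, and_self]

lemma le_of_mem_floorBar_left (hne : cu ≠ cv)
    (h : cu ∈ Icc (floorLo p cu cv k) (floorHi p cu cv k)) : k ≤ p := by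
  by_contra! hk
  rw [(floorLo_floorHi_of_gt hk).1, (floorLo_floorHi_of_gt hk).2] at h
  exact hne (le_antisymm h.2 h.1)

lemma ge_of_mem_floorBar_right (hne : cu ≠ cv)
    (h : cv ∈ Icc (floorLo p cu cv k) (floorHi p cu cv k)) : p ≤ k := by
  by_contra! hk
  rw [(floorLo_floorHi_of_lt hk).1, (floorLo_floorHi_of_lt hk).2] at h
  exact hne (le_antisymm h.2 h.1).symm

def floorYc (p t : ℕ) (hu hv : ℕ → ℝ) (k : ℕ) : ℝ :=
  if k ≤ p then hu k else hv (t + 1 - k)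

lemma floorYc_of_le {hu hv : ℕ → ℝ} (h : k ≤ p) : floorYc p t hu hv k = hu k := if_pos h

lemma floorYc_of_ge {hu hv : ℕ → ℝ} (hp : hu p = hv (t + 1 - p)) (h : p ≤ k) :
    floorYc p t hu hv k = hv (t + 1 - k) := by
  rcases h.eq_or_lt with rfl | h
  · exact (floorYc_of_le le_rfl).trans hp
  · exact if_neg (not_le.2 h)

/-- The path descends from `u` along the line `x = cu` to a floor bar below all other bars,
spanning from `cu` to `cv`, and climbs from there along `x = cv` to `v`: the first `p` edges
follow the ladder `hu`, the others the ladder `hv` read backwards. -/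
def floorRoute {u v : V} (hp : 0 < p) (hpt : p ≤ t) (hcu : cu ∈ Icc (R.lo u) (R.hi u))
    (hcv : cv ∈ Icc (R.lo v) (R.hi v)) (hne : cu ≠ cv) (hcu' : cu ∉ range R.sight)
    (hcv' : cv ∉ range R.sight) {yA : ℝ} (hyA : ∀ z, yA < R.yc z) {hu hv : ℕ → ℝ}
    (hu0 : hu 0 = R.yc u) (hup : hu p = yA) (hul : IsLadder (R.colHeights cu) hu p)
    (hv0 : hv 0 = R.yc v) (hvq : hv (t + 1 - p) = yA)
    (hvl : IsLadder (R.colHeights cv) hv (t + 1 - p)) : R.PathRoute u v t where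
  lo := floorLo p cu cv
  hi := floorHi p cu cv
  yc := floorYc p t hu hv
  col := floorCol p cu cv
  yc_zero := (floorYc_of_le (Nat.zero_le p)).trans hu0
  yc_last := by rw [floorYc_of_ge (hup.trans hvq.symm) (by omega), Nat.sub_self, hv0]
  lo_le_hi _ := min_le_max
  disjoint_new j k hj hjk hkt := by
    rw [hBar_disjoint_iff]
    by_cases hkp : k ≤ p
    · rw [floorYc_of_le (by omega), floorYc_of_le hkp]
      exact Or.inr (hul.1 hjk).ne'
    by_cases hjp : p ≤ j
    · rw [floorYc_of_ge (hup.trans hvq.symm) hjp, floorYc_of_ge (hup.trans hvq.symm) (by omega)]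
      exact Or.inr (hvl.1 (show t + 1 - k < t + 1 - j by omega)).ne
    · rw [(floorLo_floorHi_of_lt (by omega)).1, (floorLo_floorHi_of_lt (by omega)).2,
        (floorLo_floorHi_of_gt (by omega)).1, (floorLo_floorHi_of_gt (by omega)).2, Icc_self,
        Icc_self, disjoint_singleton]
      exact Or.inl hne
  disjoint_old k z hk hkt := by
    rcases lt_trichotomy k p with hkp | rfl | hkp
    · rw [(floorLo_floorHi_of_lt hkp).1, (floorLo_floorHi_of_lt hkp).2, floorYc_of_le hkp.le]
      exact R.disjoint_hBar_of_isLadder hul hk hkp z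
    · rw [floorYc_of_le le_rfl, hup]
      exact hBar_disjoint_iff.2 (Or.inr (hyA z).ne)
    · rw [(floorLo_floorHi_of_gt hkp).1, (floorLo_floorHi_of_gt hkp).2,
        floorYc_of_ge (hup.trans hvq.symm) hkp.le]
      exact R.disjoint_hBar_of_isLadder hvl (by omega) (by omega) z
  col_zero_mem := by rwa [floorCol_of_lt hp]
  col_last_mem := by rwa [floorCol_of_le hpt]
  col_mem _ _ _ :=
    ⟨⟨min_le_left _ _, le_max_left _ _⟩, ⟨min_le_right _ _, le_max_right _ _⟩⟩
  not_meets_new i k hit _ _ hm := by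
    by_cases hip : i < p
    · rw [floorCol_of_lt hip] at hm
      rw [floorYc_of_le (le_of_mem_floorBar_left hne hm.1), floorYc_of_le hip.le,
        floorYc_of_le hip] at hm
      exact hul.1.apply_notMem_uIoo i k hm.2
    · rw [floorCol_of_le (not_lt.1 hip)] at hm
      rw [floorYc_of_ge (hup.trans hvq.symm) (ge_of_mem_floorBar_right hne hm.1),
        floorYc_of_ge (hup.trans hvq.symm) (not_lt.1 hip),
        floorYc_of_ge (hup.trans hvq.symm) (by omega), show t + 1 - i = t - i + 1 by omega,
        show t + 1 - (i + 1) = t - i by omega, barMeetsSeg_comm] at hm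
      exact hvl.1.apply_notMem_uIoo (t - i) (t + 1 - k) hm.2
  meets_old_subsingleton i hit := by
    by_cases hip : i < p
    · rw [floorCol_of_lt hip, floorYc_of_le hip.le, floorYc_of_le hip]
      exact R.meets_subsingleton_of_isLadder hul hip
    · rw [floorCol_of_le (not_lt.1 hip), floorYc_of_ge (hup.trans hvq.symm) (not_lt.1 hip),
        floorYc_of_ge (hup.trans hvq.symm) (by omega), show t + 1 - i = t - i + 1 by omega,
        show t + 1 - (i + 1) = t - i by omega]
      exact (R.meets_subsingleton_of_isLadder hvl (i := t - i) (by omega)).anti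
        fun z hz => barMeetsSeg_comm.1 hz
  not_meets_sight a b _ k _ _ hm := by
    rcases lt_trichotomy k p with hkp | rfl | hkp
    · rw [(floorLo_floorHi_of_lt hkp).1, (floorLo_floorHi_of_lt hkp).2] at hm
      exact hcu' ⟨s(a, b), le_antisymm hm.1.2 hm.1.1⟩
    · rw [floorYc_of_le le_rfl, hup] at hm
      exact absurd hm.2.1 (not_lt.2 (le_min (hyA a).le (hyA b).le))
    · rw [(floorLo_floorHi_of_gt hkp).1, (floorLo_floorHi_of_gt hkp).2] at hm
      exact hcv' ⟨s(a, b), le_antisymm hm.1.2 hm.1.1⟩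

end FloorRoute

lemma isBar1VisibilityGraph_pathAdd_of_below [Finite V] {u v : V} (huv : u ≠ v) {t : ℕ}
    (ht : 1 ≤ t) {cu cv : ℝ} (hcu : cu ∈ Icc (R.lo u) (R.hi u))
    (hcv : cv ∈ Icc (R.lo v) (R.hi v)) (hne : cu ≠ cv) (hcu' : cu ∉ range R.sight)
    (hcv' : cv ∉ range R.sight) (hcount : (R.below cu u).ncard + (R.below cv v).ncard ≤ t) :
    IsBar1VisibilityGraph (pathAdd G u v t ∅) := by
  obtain ⟨yA, hyA⟩ : ∃ yA, ∀ z, yA < R.yc z := by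
    obtain ⟨m, hm⟩ := (finite_range R.yc).bddBelow
    exact ⟨m - 1, fun z => by linarith [hm ⟨z, rfl⟩]⟩
  have hbelow : ∀ c x z, c ∈ Icc (R.lo z) (R.hi z) → R.yc z ∈ Ioo yA (R.yc x) →
      z ∈ R.below c x := fun _ _ _ hz hy => ⟨hz, hy.2⟩
  set p := max (R.below cu u).ncard 1
  obtain ⟨hu, hu0, hup, hul⟩ := exists_ladder (R.colHeights cu) (hyA u) (m := p) (by omega)
    ((R.finite_colHeights cu).inter_of_left _)
    ((R.ncard_colHeights_inter_le (hbelow cu u)).trans (le_max_left _ _))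
  obtain ⟨hv, hv0, hvq, hvl⟩ := exists_ladder (R.colHeights cv) (hyA v) (m := t + 1 - p)
    (by omega) ((R.finite_colHeights cv).inter_of_left _)
    ((R.ncard_colHeights_inter_le (hbelow cv v)).trans (by omega))
  exact (R.floorRoute (by omega) (by omega) hcu hcv hne hcu' hcv' hyA hu0 hup hul hv0 hvq
    hvl).isBar1VisibilityGraph huv ht

lemma isBar1VisibilityGraph_pathAdd_of_overlap [Fintype V] {u v : V} (huv : u ≠ v) {t : ℕ}
    (ht : 1 ≤ t) (htV : Fintype.card V ≤ t + 2)
    (hov : max (R.lo u) (R.lo v) < min (R.hi u) (R.hi v)) :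
    IsBar1VisibilityGraph (pathAdd G u v t ∅) := by
  obtain ⟨c, hc, hc'⟩ := R.exists_fresh_col hov
  have hcu : c ∈ Icc (R.lo u) (R.hi u) :=
    ⟨(le_max_left _ _).trans hc.1.le, hc.2.le.trans (min_le_left _ _)⟩
  have hcv : c ∈ Icc (R.lo v) (R.hi v) :=
    ⟨(le_max_right _ _).trans hc.1.le, hc.2.le.trans (min_le_right _ _)⟩
  rcases lt_trichotomy (R.yc v) (R.yc u) with h | h | h
  · exact R.isBar1VisibilityGraph_pathAdd_of_column huv ht htV hcu hcv hc' h
  · exact absurd (R.eq_of_mem_of_yc_eq hcv hcu h) huv.symm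
  · exact R.flip.isBar1VisibilityGraph_pathAdd_of_column huv ht htV hcu hcv hc' (neg_lt_neg h)

/-- Going down on both sides or up on both sides, one of the two ways meets at most
`|V| - 2` bars, since neither line meets the bar of the other end vertex. -/
lemma isBar1VisibilityGraph_pathAdd_of_not_overlap [Fintype V] {u v : V} (huv : u ≠ v) {t : ℕ}
    (ht : 1 ≤ t) (htV : Fintype.card V ≤ t + 2) (hR : ∀ z, R.lo z < R.hi z)
    (hov : ¬ max (R.lo u) (R.lo v) < min (R.hi u) (R.hi v)) :
    IsBar1VisibilityGraph (pathAdd G u v t ∅) := by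
  obtain ⟨cu, hcu, hcu'⟩ := R.exists_fresh_col (hR u)
  obtain ⟨cv, hcv, hcv'⟩ := R.exists_fresh_col (hR v)
  have hcuv : cu ∉ Icc (R.lo v) (R.hi v) := fun h => hov (max_lt
    (lt_min (hR u) (hcu.1.trans_le h.2)) (lt_min (h.1.trans_lt hcu.2) (hR v)))
  have hcvu : cv ∉ Icc (R.lo u) (R.hi u) := fun h => hov (max_lt
    (lt_min (hR u) (h.1.trans_lt hcv.2)) (lt_min (hcv.1.trans_le h.2) (hR v)))
  have hne : cu ≠ cv := fun h => hcuv (h ▸ Ioo_subset_Icc_self hcv)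
  have hu := R.ncard_below_add_ncard_flip_below_le huv hcuv
  have hv := R.ncard_below_add_ncard_flip_below_le huv.symm hcvu
  rcases le_or_gt ((R.below cu u).ncard + (R.below cv v).ncard) t with h | h
  · exact R.isBar1VisibilityGraph_pathAdd_of_below huv ht (Ioo_subset_Icc_self hcu)
      (Ioo_subset_Icc_self hcv) hne hcu' hcv' h
  · exact R.flip.isBar1VisibilityGraph_pathAdd_of_below huv ht (Ioo_subset_Icc_self hcu)
      (Ioo_subset_Icc_self hcv) hne hcu' hcv' (by omega)

end Bar1VisRep

/-- The class of (weak) bar 1-visibility graphs is closed under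
path-addition (with empty supplementary edge set, the class being hereditary). -/
theorem bar1Visibility_closed_under_pathAddition
    {V : Type} [Fintype V] (G : SimpleGraph V) (hG : IsBar1VisibilityGraph G)
    (u v : V) (huv : u ≠ v)
    (t : ℕ) (ht : Fintype.card V - 1 ≤ t + 1) :
    IsBar1VisibilityGraph (pathAdd G u v t ∅) := by
  rcases Nat.eq_zero_or_pos t with rfl | ht0
  · refine isBar1VisibilityGraph_of_card_le_three _ ?_
    rw [Fintype.card_sum, Fintype.card_fin]
    omega
  obtain ⟨R₀⟩ := hG
  obtain ⟨R, hR⟩ := R₀.exists_lo_lt_hi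
  by_cases hov : max (R.lo u) (R.lo v) < min (R.hi u) (R.hi v)
  · exact R.isBar1VisibilityGraph_pathAdd_of_overlap huv ht0 (by omega) hov
  · exact R.isBar1VisibilityGraph_pathAdd_of_not_overlap huv ht0 (by omega) hR hov
end

section
/- The class of (weak) aligned bar 1-visibility (AB1V) graphs is closed under path-addition: if a finite simple graph G admits an aligned bar 1-visibility representation, u and v are distinct vertices of G, and P is a path of length at least |V(G)|−1 from u to v whose internal vertices are new, then G ⊕ P ⊕ ∅ admits an aligned bar 1-visibility representation. -/
/-- The vertical bar at x-coordinate `x` reaching from the x-axis up to height `h`. -/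
def vBar (x h : ℝ) : Set Plane := ({x} : Set ℝ) ×ˢ Set.Icc 0 h

/-- A (weak) aligned bar 1-visibility representation of `G`: each vertex gets a vertical
closed bar whose bottom endpoint lies on the x-axis, the bars having pairwise distinct
x-coordinates, and each edge `xy` a horizontal line of sight with one endpoint on the bar
of `x` and the other on the bar of `y` whose interior intersects the bars of at most one
vertex other than `x` and `y`. -/
structure AlignedBar1VisRep {V : Type*} (G : SimpleGraph V) where
  /-- the x-coordinate of the bar of each vertex -/
  xc : V → ℝ
  /-- the height of the bar of each vertex -/
  ht : V → ℝ
  ht_nonneg : ∀ x : V, 0 ≤ ht x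
  xc_inj : Function.Injective xc
  /-- the y-coordinate of the horizontal line of sight chosen for each edge -/
  sight : Sym2 V → ℝ
  sight_on_bars : ∀ x y : V, G.Adj x y →
    sight s(x, y) ∈ Set.Icc 0 (ht x) ∧ sight s(x, y) ∈ Set.Icc 0 (ht y)
  sight_one_bar : ∀ x y : V, G.Adj x y →
    {z : V | z ≠ x ∧ z ≠ y ∧
      ((Set.Ioo (min (xc x) (xc y)) (max (xc x) (xc y)) ×ˢ ({sight s(x, y)} : Set ℝ)) ∩
        vBar (xc z) (ht z)).Nonempty}.Subsingleton

/-- A graph is a (weak) aligned bar 1-visibility (AB1V) graph if it admits an aligned bar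
1-visibility representation. -/
def IsAlignedBar1VisibilityGraph {V : Type*} (G : SimpleGraph V) : Prop :=
  Nonempty (AlignedBar1VisRep G)


open Function Set

lemma Ioo_prod_singleton_inter_vBar_nonempty_iff {a b σ x h : ℝ} :
    ((Ioo a b ×ˢ ({σ} : Set ℝ)) ∩ vBar x h).Nonempty ↔ x ∈ Ioo a b ∧ σ ∈ Icc 0 h := by
  constructor
  · rintro ⟨⟨_, _⟩, ⟨hx, rfl⟩, rfl, hσ⟩
    exact ⟨hx, hσ⟩
  · rintro ⟨hx, hσ⟩
    exact ⟨(x, σ), ⟨hx, rfl⟩, rfl, hσ⟩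

lemma mem_uIoo_iff_of_lt_iff {ι α β : Type*} [LinearOrder α] [LinearOrder β] {f : ι → α}
    {g : ι → β} (h : ∀ x y, f x < f y ↔ g x < g y) (x y z : ι) :
    f z ∈ uIoo (f x) (f y) ↔ g z ∈ uIoo (g x) (g y) := by
  simp only [uIoo_eq_union, mem_union, mem_Ioo, h]

lemma mem_uIoo_iff_of_lt_iff_swap {ι α β : Type*} [LinearOrder α] [LinearOrder β] {f : ι → α}
    {g : ι → β} (h : ∀ x y, f x < f y ↔ g y < g x) (x y z : ι) :
    f z ∈ uIoo (f x) (f y) ↔ g z ∈ uIoo (g x) (g y) := by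
  simp only [uIoo_eq_union, mem_union, mem_Ioo, h]
  tauto

def blockers {V : Type*} (xc ht : V → ℝ) (x y : V) (σ : ℝ) : Set V :=
  {z | z ≠ x ∧ z ≠ y ∧ xc z ∈ uIoo (xc x) (xc y) ∧ σ ≤ ht z}

namespace AlignedBar1VisRep

variable {V : Type*} {G : SimpleGraph V}

def ofBlockers (xc ht : V → ℝ) (ht_nonneg : ∀ x, 0 ≤ ht x) (xc_inj : Injective xc)
    (sight : Sym2 V → ℝ)
    (sight_on_bars : ∀ x y, G.Adj x y →
      sight s(x, y) ∈ Icc 0 (ht x) ∧ sight s(x, y) ∈ Icc 0 (ht y))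
    (blockers_subsingleton : ∀ x y, G.Adj x y →
      (blockers xc ht x y (sight s(x, y))).Subsingleton) :
    AlignedBar1VisRep G where
  xc := xc
  ht := ht
  ht_nonneg := ht_nonneg
  xc_inj := xc_inj
  sight := sight
  sight_on_bars := sight_on_bars
  sight_one_bar x y hxy := (blockers_subsingleton x y hxy).anti fun _ ⟨hzx, hzy, hz⟩ => by
    rw [Ioo_prod_singleton_inter_vBar_nonempty_iff] at hz
    exact ⟨hzx, hzy, hz.1, hz.2.2⟩

lemma blockers_subsingleton (R : AlignedBar1VisRep G) {x y : V} (hxy : G.Adj x y) :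
    (blockers R.xc R.ht x y (R.sight s(x, y))).Subsingleton :=
  (R.sight_one_bar x y hxy).anti fun _ ⟨hzx, hzy, hz, hσ⟩ =>
    ⟨hzx, hzy, Ioo_prod_singleton_inter_vBar_nonempty_iff.2
      ⟨hz, (R.sight_on_bars x y hxy).1.1, hσ⟩⟩

def relabel (R : AlignedBar1VisRep G) (f : V → ℝ) (hf : Injective f)
    (hbetween : ∀ x y z, f z ∈ uIoo (f x) (f y) ↔ R.xc z ∈ uIoo (R.xc x) (R.xc y)) :
    AlignedBar1VisRep G :=
  ofBlockers f R.ht R.ht_nonneg hf R.sight R.sight_on_bars fun x y hxy => by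
    simpa only [blockers, hbetween] using R.blockers_subsingleton hxy

def reflect (R : AlignedBar1VisRep G) : AlignedBar1VisRep G :=
  R.relabel (fun z => -R.xc z) (neg_injective.comp R.xc_inj)
    (mem_uIoo_iff_of_lt_iff_swap fun _ _ => neg_lt_neg_iff)

lemma exists_xc_lt (R : AlignedBar1VisRep G) {u v : V} (huv : u ≠ v) :
    ∃ R' : AlignedBar1VisRep G, R'.xc u < R'.xc v := by
  rcases (R.xc_inj.ne huv).lt_or_gt with h | h
  · exact ⟨R, h⟩
  · exact ⟨R.reflect, neg_lt_neg h⟩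

end AlignedBar1VisRep

lemma Function.Injective.of_lt_iff {ι α β : Type*} [LinearOrder α] [LinearOrder β]
    {f : ι → α} {g : ι → β} (hg : Injective g) (h : ∀ x y, f x < f y ↔ g x < g y) :
    Injective f := fun x y hxy =>
  hg <| le_antisymm (not_lt.1 fun hlt => ((h y x).2 hlt).ne' hxy)
    (not_lt.1 fun hlt => ((h x y).2 hlt).ne hxy)

section Rank

variable {V α : Type*} [Fintype V] [LinearOrder α]

open Finset in
noncomputable def rank (f : V → α) (z : V) : ℕ := #{z' | f z' < f z}

lemma rank_le_rank {f : V → α} {x y : V} (h : f x ≤ f y) : rank f x ≤ rank f y :=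
  Finset.card_le_card <| Finset.monotone_filter_right _ fun _ _ hz => hz.trans_le h

lemma rank_lt_rank {f : V → α} {x y : V} (h : f x < f y) : rank f x < rank f y :=
  Finset.card_lt_card <| (Finset.ssubset_iff_of_subset <| Finset.monotone_filter_right _
    fun _ _ hz => hz.trans h).2 ⟨x, by simpa using h, by simp⟩

lemma rank_lt_rank_iff (f : V → α) (x y : V) : rank f x < rank f y ↔ f x < f y :=
  ⟨fun h => not_le.1 fun hyx => (rank_le_rank hyx).not_gt h, rank_lt_rank⟩

lemma rank_lt_card (f : V → α) (z : V) : rank f z < Fintype.card V :=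
  Finset.card_lt_card <| Finset.filter_ssubset.2 ⟨z, Finset.mem_univ z, lt_irrefl _⟩

end Rank

namespace AlignedBar1VisRep

variable {V : Type*} {G : SimpleGraph V}

lemma exists_intCast_xc [Fintype V] (R : AlignedBar1VisRep G) {u v : V}
    (huv : R.xc u < R.xc v) :
    ∃ (R' : AlignedBar1VisRep G) (p : V → ℤ),
      (∀ z, R'.xc z = p z) ∧ p u = 0 ∧ 0 < p v ∧ p v < Fintype.card V := by
  set p : V → ℤ := fun z => rank R.xc z - rank R.xc u
  have hp : ∀ x y, (p x : ℝ) < p y ↔ R.xc x < R.xc y := fun x y => by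
    rw [Int.cast_lt, sub_lt_sub_iff_right, Nat.cast_lt, rank_lt_rank_iff]
  refine ⟨R.relabel (fun z => p z) (R.xc_inj.of_lt_iff hp) (mem_uIoo_iff_of_lt_iff hp),
    p, fun _ => rfl, sub_self _, sub_pos.2 (Nat.cast_lt.2 (rank_lt_rank huv)), ?_⟩
  have := rank_lt_card R.xc v
  change (rank R.xc v : ℤ) - rank R.xc u < Fintype.card V
  omega

end AlignedBar1VisRep

section PathPosition

variable {m : ℤ} {t k : ℕ}

/-- Position of the `k`-th vertex of the new path, `u` at `0` and (for `m ≤ t + 1`) `v` at `m`: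
the interior vertices lie strictly increasing in `k`, each in the open unit interval just left
of the integer `min k m`. -/
noncomputable def pathPos (m : ℤ) (t k : ℕ) : ℝ :=
  if k = 0 then 0 else ((min (k : ℤ) m : ℤ) : ℝ) - ((t : ℝ) + 1 - k) / ((t : ℝ) + 1)

@[simp]
lemma pathPos_zero : pathPos m t 0 = 0 := if_pos rfl

lemma pathPos_of_ne_zero (hk : k ≠ 0) :
    pathPos m t k = ((min (k : ℤ) m : ℤ) : ℝ) - ((t : ℝ) + 1 - k) / ((t : ℝ) + 1) :=
  if_neg hk

lemma pathPos_strictMono (hm : 0 < m) : StrictMono (pathPos m t) := by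
  refine strictMono_nat_of_lt_succ fun k => ?_
  have ht : (0 : ℝ) < t + 1 := by positivity
  rw [pathPos_of_ne_zero k.succ_ne_zero]
  rcases Nat.eq_zero_or_pos k with rfl | hk
  · have h : ((t : ℝ) + 1 - (0 + 1 : ℕ)) / (t + 1) < 1 :=
      (div_lt_one ht).2 (by push_cast; linarith)
    rw [pathPos_zero, show min ((0 + 1 : ℕ) : ℤ) m = 1 by omega, Int.cast_one]
    linarith
  · rw [pathPos_of_ne_zero hk.ne']
    have hmin : ((min (k : ℤ) m : ℤ) : ℝ) ≤ ((min ((k + 1 : ℕ) : ℤ) m : ℤ) : ℝ) := by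
      exact_mod_cast min_le_min_right m (by omega)
    have hfrac : ((t : ℝ) + 1 - (k + 1 : ℕ)) / (t + 1) < ((t : ℝ) + 1 - k) / (t + 1) := by
      gcongr; linarith
    linarith

lemma pathPos_mem_Icc (hm : 0 ≤ m) (hk : k ≤ t + 1) :
    pathPos m t k ∈ Icc (((min (k : ℤ) m : ℤ) : ℝ) - 1) ((min (k : ℤ) m : ℤ) : ℝ) := by
  rcases Nat.eq_zero_or_pos k with rfl | hk0
  · simp [hm]
  rw [pathPos_of_ne_zero hk0.ne']
  have ht : (0 : ℝ) < t + 1 := by positivity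
  have hk' : (k : ℝ) ≤ t + 1 := by exact_mod_cast hk
  have h0 : 0 ≤ ((t : ℝ) + 1 - k) / (t + 1) := div_nonneg (by linarith) ht.le
  have h1 : ((t : ℝ) + 1 - k) / (t + 1) ≤ 1 := (div_le_one ht).2 (by linarith)
  constructor <;> linarith

lemma pathPos_mem_Ioo (hk0 : k ≠ 0) (hk : k ≤ t) :
    pathPos m t k ∈ Ioo (((min (k : ℤ) m : ℤ) : ℝ) - 1) ((min (k : ℤ) m : ℤ) : ℝ) := by
  rw [pathPos_of_ne_zero hk0]
  have ht : (0 : ℝ) < t + 1 := by positivity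
  have hk' : (k : ℝ) ≤ t := by exact_mod_cast hk
  have hk0' : (1 : ℝ) ≤ k := by exact_mod_cast Nat.one_le_iff_ne_zero.2 hk0
  have h0 : 0 < ((t : ℝ) + 1 - k) / (t + 1) := div_pos (by linarith) ht
  have h1 : ((t : ℝ) + 1 - k) / (t + 1) < 1 := (div_lt_one ht).2 (by linarith)
  constructor <;> linarith

lemma pathPos_ne_intCast (hk0 : k ≠ 0) (hk : k ≤ t) (c : ℤ) : pathPos m t k ≠ c := by
  intro hc
  obtain ⟨h1, h2⟩ := pathPos_mem_Ioo (m := m) hk0 hk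
  rw [hc] at h1 h2
  have h1' : min (k : ℤ) m - 1 < c := by exact_mod_cast h1
  have h2' : c < min (k : ℤ) m := by exact_mod_cast h2
  omega

lemma pathPos_last (hm : m ≤ t + 1) : pathPos m t (t + 1) = m := by
  rw [pathPos_of_ne_zero t.succ_ne_zero, show min ((t + 1 : ℕ) : ℤ) m = m by omega]
  push_cast
  simp

lemma eq_of_intCast_mem_Ioo_pathPos (hm : 0 ≤ m) (hk : k ≤ t) {c : ℤ}
    (hc : (c : ℝ) ∈ Ioo (pathPos m t k) (pathPos m t (k + 1))) : c = min (k : ℤ) m := by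
  have h1 := (pathPos_mem_Icc hm (k := k) (by omega)).1.trans_lt hc.1
  have h2 := hc.2.trans_le (pathPos_mem_Icc hm (k := k + 1) (by omega)).2
  have h1' : min (k : ℤ) m - 1 < c := by exact_mod_cast h1
  have h2' : c < min ((k + 1 : ℕ) : ℤ) m := by exact_mod_cast h2
  omega

end PathPosition

section PathAddition

open Sum

variable {V : Type*} {G : SimpleGraph V} {u v : V} {t : ℕ}

lemma pathAdd_empty_adj_cases {x y : V ⊕ Fin t} (h : (pathAdd G u v t ∅).Adj x y) :
    (∃ a b, G.Adj a b ∧ x = inl a ∧ y = inl b) ∨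
      ∃ i : Fin (t + 1), s(x, y) = s(chainVertex (inl u) (inl v) inr i.castSucc,
        chainVertex (inl u) (inl v) inr i.succ) := by
  rw [pathAdd, SimpleGraph.fromEdgeSet_adj, union_empty] at h
  rcases h.1 with ⟨e, he, hxy⟩ | ⟨i, hi⟩
  · left
    induction e using Sym2.ind with
    | h a b =>
      rw [Sym2.map_mk, Sym2.eq_iff] at hxy
      rcases hxy with ⟨rfl, rfl⟩ | ⟨rfl, rfl⟩
      exacts [⟨a, b, he, rfl, rfl⟩, ⟨b, a, G.adj_symm he, rfl, rfl⟩]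
  · exact .inr ⟨i, hi⟩

noncomputable def pathXc (p : V → ℤ) (m : ℤ) (t : ℕ) : V ⊕ Fin t → ℝ :=
  Sum.elim (fun z => p z) fun j => pathPos m t (j + 1)

variable {p : V → ℤ} {m : ℤ}

lemma pathXc_injective (hp : Injective p) (hm : 0 < m) :
    Injective (pathXc p m t) := by
  rintro (a | i) (b | j) h <;> simp only [pathXc, elim_inl, elim_inr] at h
  · exact congrArg inl (hp (Int.cast_injective h))
  · exact absurd h.symm (pathPos_ne_intCast j.val.succ_ne_zero j.isLt _)
  · exact absurd h (pathPos_ne_intCast i.val.succ_ne_zero i.isLt _)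
  · exact congrArg inr (Fin.ext (Nat.succ_injective ((pathPos_strictMono hm).injective h)))

lemma pathXc_chainVertex (hu : p u = 0) (hv : p v = m) (hm : m ≤ t + 1) (k : Fin (t + 2)) :
    pathXc p m t (chainVertex (inl u) (inl v) inr k) = pathPos m t k := by
  unfold chainVertex
  split_ifs with h0 h1
  · simp [pathXc, hu, h0]
  · simp [pathXc, hv, h1, pathPos_last hm]
  · simp only [pathXc, elim_inr]
    congr
    omega

/-- On a path edge the line of sight runs at height `0`, so every bar strictly between its
ends blocks it; there is at most one, the old bar at the integer the edge straddles. -/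
lemma subsingleton_between_chainEdge (hp : Injective p) (hu : p u = 0) (hv : p v = m)
    (hm0 : 0 < m) (hmt : m ≤ t + 1) {x y : V ⊕ Fin t} (i : Fin (t + 1))
    (hi : s(x, y) = s(chainVertex (inl u) (inl v) inr i.castSucc,
      chainVertex (inl u) (inl v) inr i.succ)) :
    {z | pathXc p m t z ∈ uIoo (pathXc p m t x) (pathXc p m t y)}.Subsingleton := by
  have hmono := pathPos_strictMono (t := t) hm0
  have hbetween : ∀ z, pathXc p m t z ∈ uIoo (pathXc p m t x) (pathXc p m t y) →
      pathXc p m t z ∈ Ioo (pathPos m t i) (pathPos m t (i + 1)) := by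
    intro z hz
    rw [← uIoo_of_lt (hmono (Nat.lt_succ_self i))]
    rcases Sym2.eq_iff.1 hi with ⟨rfl, rfl⟩ | ⟨rfl, rfl⟩ <;>
      simpa [pathXc_chainVertex hu hv hmt, uIoo_comm] using hz
  have hblocker : ∀ z, pathXc p m t z ∈ uIoo (pathXc p m t x) (pathXc p m t y) →
      ∃ w, z = inl w ∧ p w = min (i : ℤ) m := by
    rintro (w | j) hz
    · exact ⟨w, rfl,
        eq_of_intCast_mem_Ioo_pathPos hm0.le (Nat.lt_succ_iff.1 i.isLt) (hbetween _ hz)⟩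
    · obtain ⟨h1, h2⟩ : pathPos m t (j + 1) ∈ Ioo (pathPos m t i) (pathPos m t (i + 1)) :=
        hbetween _ hz
      have := hmono.lt_iff_lt.1 h1
      have := hmono.lt_iff_lt.1 h2
      omega
  intro z₁ h₁ z₂ h₂
  obtain ⟨w₁, rfl, hw₁⟩ := hblocker z₁ h₁
  obtain ⟨w₂, rfl, hw₂⟩ := hblocker z₂ h₂
  exact congrArg inl (hp (hw₁.trans hw₂.symm))

noncomputable def liftedHt {W : Type*} (ht : V → ℝ) : V ⊕ W → ℝ :=
  Sum.elim (fun z => ht z + 1) 0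

open Classical in
/-- Raised by one unit, old lines of sight pass above the new bars, which have height `0`. -/
noncomputable def liftedSight {W : Type*} (G : SimpleGraph V) (σ : Sym2 V → ℝ) :
    Sym2 (V ⊕ W) → ℝ :=
  Sym2.lift ⟨fun x y => match x, y with
    | inl a, inl b => if G.Adj a b then σ s(a, b) + 1 else 0
    | _, _ => 0, by
    rintro (a | i) (b | j) <;> simp [G.adj_comm, Sym2.eq_swap]⟩

lemma liftedSight_inl_inl {W : Type*} {σ : Sym2 V → ℝ} {a b : V} (h : G.Adj a b) :
    liftedSight (W := W) G σ s(inl a, inl b) = σ s(a, b) + 1 := by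
  simp [liftedSight, h]

lemma liftedSight_eq_zero {W : Type*} {σ : Sym2 V → ℝ} {x y : V ⊕ W}
    (h : ¬∃ a b, G.Adj a b ∧ x = inl a ∧ y = inl b) : liftedSight G σ s(x, y) = 0 := by
  rcases x with a | i <;> rcases y with b | j <;> simp_all [liftedSight]

lemma blockers_pathXc_inl_subset {R : AlignedBar1VisRep G} (hp : ∀ z, R.xc z = p z) {a b : V}
    {σ : ℝ} (hσ : 0 ≤ σ) :
    blockers (pathXc p m t) (liftedHt R.ht) (inl a) (inl b) (σ + 1) ⊆
      inl '' blockers R.xc R.ht a b σ := by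
  rintro (w | j) ⟨hwa, hwb, hw, hσw⟩
  · refine ⟨w, ⟨fun h => hwa (congrArg inl h), fun h => hwb (congrArg inl h), ?_, ?_⟩, rfl⟩
    · simpa [pathXc, hp] using hw
    · simpa [liftedHt] using hσw
  · simp only [liftedHt, elim_inr, Pi.zero_apply] at hσw
    linarith

end PathAddition

namespace AlignedBar1VisRep

open Sum

variable {V : Type*} {G : SimpleGraph V} {u v : V} {t : ℕ}

lemma liftedHt_nonneg {W : Type*} (R : AlignedBar1VisRep G) (z : V ⊕ W) :
    0 ≤ liftedHt R.ht z := by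
  rcases z with a | j
  · exact (R.ht_nonneg a).trans (le_add_of_nonneg_right zero_le_one)
  · exact le_rfl

lemma liftedSight_mem_Icc {W : Type*} (R : AlignedBar1VisRep G) (x y : V ⊕ W) :
    liftedSight G R.sight s(x, y) ∈ Icc 0 (liftedHt R.ht x) ∧
      liftedSight G R.sight s(x, y) ∈ Icc 0 (liftedHt R.ht y) := by
  by_cases hold : ∃ a b, G.Adj a b ∧ x = inl a ∧ y = inl b
  · obtain ⟨a, b, hab, rfl, rfl⟩ := hold
    obtain ⟨⟨ha0, ha⟩, -, hb⟩ := R.sight_on_bars a b hab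
    simp only [liftedSight_inl_inl hab, liftedHt, elim_inl, mem_Icc]
    refine ⟨⟨?_, ?_⟩, ?_, ?_⟩ <;> linarith
  · rw [liftedSight_eq_zero hold]
    exact ⟨⟨le_rfl, R.liftedHt_nonneg x⟩, le_rfl, R.liftedHt_nonneg y⟩

noncomputable def addPath (R : AlignedBar1VisRep G) (p : V → ℤ) (hp : ∀ z, R.xc z = p z)
    (hu : p u = 0) (hv0 : 0 < p v) (hvt : p v ≤ t + 1) :
    AlignedBar1VisRep (pathAdd G u v t ∅) :=
  have hp_inj : Injective p := fun x y h => R.xc_inj (by rw [hp, hp, h])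
  ofBlockers (pathXc p (p v) t) (liftedHt R.ht) R.liftedHt_nonneg
    (pathXc_injective hp_inj hv0) (liftedSight G R.sight)
    (fun x y _ => R.liftedSight_mem_Icc x y) fun x y hxy => by
      by_cases hold : ∃ a b, G.Adj a b ∧ x = inl a ∧ y = inl b
      · obtain ⟨a, b, hab, rfl, rfl⟩ := hold
        rw [liftedSight_inl_inl hab]
        exact ((R.blockers_subsingleton hab).image inl).anti
          (blockers_pathXc_inl_subset hp (R.sight_on_bars a b hab).1.1)
      · obtain ⟨i, hi⟩ := (pathAdd_empty_adj_cases hxy).resolve_left hold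
        exact (subsingleton_between_chainEdge hp_inj hu rfl hv0 hvt i hi).anti
          fun _ hz => hz.2.2.1

end AlignedBar1VisRep

/-- The class of (weak) aligned bar 1-visibility graphs is closed under
path-addition (with empty supplementary edge set, the class being hereditary). -/
theorem alignedBar1Visibility_closed_under_pathAddition
    {V : Type} [Fintype V] (G : SimpleGraph V) (hG : IsAlignedBar1VisibilityGraph G)
    (u v : V) (huv : u ≠ v)
    (t : ℕ) (ht : Fintype.card V - 1 ≤ t + 1) :
    IsAlignedBar1VisibilityGraph (pathAdd G u v t ∅) := by
  obtain ⟨R⟩ := hG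
  obtain ⟨R, hR⟩ := R.exists_xc_lt huv
  obtain ⟨R, p, hp, hu, hv0, hvn⟩ := R.exists_intCast_xc hR
  exact ⟨R.addPath p hp hu hv0 (by omega)⟩
end

section
/- Let 𝒢 be an isomorphism-closed class of finite simple graphs that is closed under path-addition and contains a graph with at least two vertices. Then for every k ≥ 1, 𝒢 contains a graph H that contains a subdivision of the complete graph K_k as a subgraph, i.e., H has k distinct branch vertices and a family of paths in H, one joining each pair of branch vertices, such that the paths are pairwise internally vertex-disjoint and their internal vertices avoid all branch vertices. -/
def IsoClosed (𝒢 : ∀ V : Type, Fintype V → SimpleGraph V → Prop) : Prop :=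
  ∀ (V W : Type) [iV : Fintype V] [iW : Fintype W]
    (G : SimpleGraph V) (H : SimpleGraph W),
    Nonempty (G ≃g H) → 𝒢 V iV G → 𝒢 W iW H

/-- The added path has `t` new internal vertices, hence length `t + 1`. -/
def ClosedUnderPathAddition (𝒢 : ∀ V : Type, Fintype V → SimpleGraph V → Prop) : Prop :=
  ∀ (V : Type) [iV : Fintype V] (G : SimpleGraph V), 𝒢 V iV G →
    ∀ u v : V, u ≠ v → ∀ t : ℕ, Fintype.card V - 1 ≤ t + 1 →
      ∃ F : Set (Sym2 (V ⊕ Fin t)), ValidSupp F ∧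
        𝒢 (V ⊕ Fin t) inferInstance (pathAdd G u v t F)

def SimpleGraph.Walk.internalSupport {W : Type*} {H : SimpleGraph W} {a b : W}
    (p : H.Walk a b) : List W :=
  p.support.tail.dropLast

def ContainsSubdivisionOfCompleteGraph {W : Type*} (H : SimpleGraph W) (k : ℕ) : Prop :=
  ∃ br : Fin k → W, Function.Injective br ∧
    ∃ P : ∀ i j : Fin k, i < j → H.Walk (br i) (br j),
      (∀ (i j : Fin k) (h : i < j), (P i j h).IsPath) ∧
      (∀ (i j : Fin k) (h : i < j),
        ∀ x ∈ (P i j h).internalSupport, ∀ l : Fin k, x ≠ br l) ∧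
      (∀ (i j : Fin k) (h : i < j) (i' j' : Fin k) (h' : i' < j'), (i, j) ≠ (i', j') →
        ∀ x ∈ (P i j h).internalSupport, x ∉ (P i' j' h').internalSupport)

open SimpleGraph Function

namespace SimpleGraph.Walk

variable {V V' : Type*} {G : SimpleGraph V} {G' : SimpleGraph V'}

lemma internalSupport_copy {a b a' b' : V} (p : G.Walk a b) (ha : a = a') (hb : b = b') :
    (p.copy ha hb).internalSupport = p.internalSupport := by
  simp only [internalSupport, support_copy]

lemma internalSupport_map (f : G →g G') {a b : V} (p : G.Walk a b) :
    (p.map f).internalSupport = p.internalSupport.map f := by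
  simp only [internalSupport, support_map, List.map_tail, List.map_dropLast]

lemma internalSupport_ofSupport_ofFn {n : ℕ} (f : Fin (n + 2) → V)
    (hchain : (List.ofFn f).IsChain G.Adj) :
    (ofSupport _ (by simp) hchain).internalSupport =
      List.ofFn (fun i : Fin n => f i.castSucc.succ) := by
  simp only [internalSupport, support_ofSupport]
  apply List.ext_getElem
  · simp
  · intro i _ _
    rw [List.getElem_dropLast, List.getElem_tail, List.getElem_ofFn, List.getElem_ofFn]
    rfl

end SimpleGraph.Walk

section chainVertex

variable {α : Type*} (a b : α) {t : ℕ} (w : Fin t → α)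

@[simp]
lemma chainVertex_zero : chainVertex a b w 0 = a := by
  simp [chainVertex]

@[simp]
lemma chainVertex_last : chainVertex a b w (Fin.last (t + 1)) = b := by
  simp [chainVertex, Fin.last]

@[simp]
lemma chainVertex_castSucc_succ (i : Fin t) : chainVertex a b w i.castSucc.succ = w i := by
  simp [chainVertex, i.isLt.ne]

variable {a b w} in
lemma chainVertex_injective (hab : a ≠ b) (hw : Injective w) (ha : a ∉ Set.range w)
    (hb : b ∉ Set.range w) : Injective (chainVertex a b w) := by
  intro i j h
  unfold chainVertex at h
  split_ifs at h
  all_goals first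
    | exact Fin.ext (by omega)
    | exact absurd h hab
    | exact absurd h.symm hab
    | exact (ha ⟨_, h.symm⟩).elim
    | exact (ha ⟨_, h⟩).elim
    | exact (hb ⟨_, h.symm⟩).elim
    | exact (hb ⟨_, h⟩).elim
    | exact Fin.ext (by have := congrArg Fin.val (hw h); simp at this; omega)

end chainVertex

section pathAdd

variable {V : Type*} (G : SimpleGraph V) (u v : V) (t : ℕ) (F : Set (Sym2 (V ⊕ Fin t)))

def pathAddInl : G →g pathAdd G u v t F where
  toFun := Sum.inl
  map_rel' hab := by
    rw [pathAdd, fromEdgeSet_adj]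
    exact ⟨Or.inl (Or.inl ⟨s(_, _), hab, rfl⟩), by simpa using hab.ne⟩

lemma pathAddInl_injective : Injective (pathAddInl G u v t F) := Sum.inl_injective

variable {u v}

lemma exists_isPath_pathAdd (huv : u ≠ v) :
    ∃ q : (pathAdd G u v t F).Walk (Sum.inl u) (Sum.inl v), q.IsPath ∧
      ∀ x ∈ q.internalSupport, x ∉ Set.range Sum.inl := by
  set c := chainVertex (Sum.inl u) (Sum.inl v) (fun i : Fin t => (Sum.inr i : V ⊕ Fin t))
  have hc : Injective c :=
    chainVertex_injective (by simpa) Sum.inr_injective (by simp) (by simp)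
  have hchain : (List.ofFn c).IsChain (pathAdd G u v t F).Adj := by
    rw [List.isChain_ofFn]
    intro i hi
    rw [pathAdd, fromEdgeSet_adj]
    refine ⟨Or.inl (Or.inr ⟨⟨i, by omega⟩, rfl⟩), fun h => ?_⟩
    have := congrArg Fin.val (hc h)
    simp at this
  refine ⟨(Walk.ofSupport _ (by simp) hchain).copy (by simp [c])
    (by rw [List.getLast_ofFn]; exact chainVertex_last _ _ _), ?_, ?_⟩
  · rw [Walk.isPath_copy, Walk.isPath_def, Walk.support_ofSupport]
    exact List.nodup_ofFn.mpr hc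
  · rw [Walk.internalSupport_copy, Walk.internalSupport_ofSupport_ofFn]
    simp [c]

end pathAdd

section InternallyDisjointPaths

variable {β W W' : Type*}

def HasInternallyDisjointPaths (H : SimpleGraph W) (br : β → W) (S : Finset (β × β)) : Prop :=
  ∃ P : ∀ p ∈ S, H.Walk (br p.1) (br p.2),
    (∀ p hp, (P p hp).IsPath) ∧
    (∀ p hp, ∀ x ∈ (P p hp).internalSupport, x ∉ Set.range br) ∧
    (∀ p hp p' hp', p ≠ p' →
      ∀ x ∈ (P p hp).internalSupport, x ∉ (P p' hp').internalSupport)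

lemma hasInternallyDisjointPaths_empty (H : SimpleGraph W) (br : β → W) :
    HasInternallyDisjointPaths H br ∅ :=
  ⟨fun p hp => absurd hp (Finset.notMem_empty p), by simp, by simp, by simp⟩

lemma HasInternallyDisjointPaths.insert_map [DecidableEq β] {H : SimpleGraph W}
    {H' : SimpleGraph W'} {br : β → W} {S : Finset (β × β)}
    (hS : HasInternallyDisjointPaths H br S) (f : H →g H') (hf : Injective f) {a : β × β}
    (q : H'.Walk (f (br a.1)) (f (br a.2))) (hq : q.IsPath)
    (hfresh : ∀ x ∈ q.internalSupport, x ∉ Set.range f) :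
    HasInternallyDisjointPaths H' (f ∘ br) (insert a S) := by
  obtain ⟨P, hpath, havoid, hdisj⟩ := hS
  let P' : ∀ p ∈ insert a S, H'.Walk (f (br p.1)) (f (br p.2)) := fun p hp =>
    if h : p = a then q.copy (by rw [h]) (by rw [h])
    else (P p (Finset.mem_of_mem_insert_of_ne hp h)).map f
  have mem_new : ∀ p hp, p = a → ∀ x ∈ (P' p hp).internalSupport, x ∉ Set.range f := by
    rintro p hp rfl x hx
    simp only [P', dite_true, Walk.internalSupport_copy] at hx
    exact hfresh x hx
  have mem_old : ∀ p hp (h : p ≠ a), ∀ x ∈ (P' p hp).internalSupport,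
      ∃ y ∈ (P p (Finset.mem_of_mem_insert_of_ne hp h)).internalSupport, f y = x := by
    intro p hp h x hx
    simp only [P', h, dite_false, Walk.internalSupport_map] at hx
    exact List.mem_map.mp hx
  refine ⟨P', fun p hp => ?_, fun p hp x hx => ?_, fun p hp p' hp' hne x hx hx' => ?_⟩
  · by_cases h : p = a
    · simpa [P', h] using hq
    · simpa [P', h] using (hpath _ _).map hf
  · rintro ⟨l, rfl⟩
    by_cases h : p = a
    · exact mem_new p hp h _ hx ⟨br l, rfl⟩
    · obtain ⟨y, hy, hyx⟩ := mem_old p hp h _ hx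
      exact havoid _ _ y hy ⟨l, (hf hyx).symm⟩
  · by_cases h : p = a <;> by_cases h' : p' = a
    · exact hne (h.trans h'.symm)
    · obtain ⟨y, -, rfl⟩ := mem_old p' hp' h' x hx'
      exact mem_new p hp h _ hx ⟨y, rfl⟩
    · obtain ⟨y, -, rfl⟩ := mem_old p hp h x hx
      exact mem_new p' hp' h' _ hx' ⟨y, rfl⟩
    · obtain ⟨y, hy, rfl⟩ := mem_old p hp h x hx
      obtain ⟨y', hy', hyy'⟩ := mem_old p' hp' h' _ hx'
      exact hdisj _ _ _ _ hne y hy (hf hyy' ▸ hy')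

end InternallyDisjointPaths

lemma containsSubdivisionOfCompleteGraph_of_hasInternallyDisjointPaths {W : Type*} {k : ℕ}
    {H : SimpleGraph W} {br : Fin k → W} (hbr : Injective br)
    (h : HasInternallyDisjointPaths H br {p : Fin k × Fin k | p.1 < p.2}) :
    ContainsSubdivisionOfCompleteGraph H k := by
  obtain ⟨P, hpath, havoid, hdisj⟩ := h
  have mem (i j : Fin k) (hij : i < j) :
      (i, j) ∈ ({p : Fin k × Fin k | p.1 < p.2} : Finset _) := by
    simpa using hij
  exact ⟨br, hbr, fun i j hij => P (i, j) (mem i j hij), fun i j hij => hpath _ _,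
    fun i j hij x hx l hxl => havoid _ _ x hx ⟨l, hxl.symm⟩,
    fun i j hij i' j' hij' hne => hdisj _ _ _ _ hne⟩

section ClosedUnderPathAddition

variable {𝒢 : ∀ V : Type, Fintype V → SimpleGraph V → Prop}

lemma ClosedUnderPathAddition.exists_le_card (hpa : ClosedUnderPathAddition 𝒢) {V : Type}
    [iV : Fintype V] {G : SimpleGraph V} (hG : 𝒢 V iV G) (hV : 1 < Fintype.card V) (n : ℕ) :
    ∃ (W : Type) (iW : Fintype W) (H : SimpleGraph W), 𝒢 W iW H ∧ n ≤ Fintype.card W := by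
  obtain ⟨u, v, huv⟩ := Fintype.exists_pair_of_one_lt_card hV
  obtain ⟨F, -, hF⟩ := hpa V G hG u v huv (Fintype.card V + n) (by omega)
  exact ⟨_, _, _, hF, by simp only [Fintype.card_sum, Fintype.card_fin]; omega⟩

lemma ClosedUnderPathAddition.exists_hasInternallyDisjointPaths_insert {β : Type*}
    [DecidableEq β] (hpa : ClosedUnderPathAddition 𝒢) {W : Type} [iW : Fintype W]
    {H : SimpleGraph W} (hH : 𝒢 W iW H) {br : β → W} (hbr : Injective br)
    {S : Finset (β × β)} (hS : HasInternallyDisjointPaths H br S) {a : β × β}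
    (ha : a.1 ≠ a.2) :
    ∃ (W' : Type) (iW' : Fintype W') (H' : SimpleGraph W') (br' : β → W'),
      𝒢 W' iW' H' ∧ Injective br' ∧ HasInternallyDisjointPaths H' br' (insert a S) := by
  have huv : br a.1 ≠ br a.2 := hbr.ne ha
  obtain ⟨F, -, hF⟩ := hpa W H hH _ _ huv (Fintype.card W) (by omega)
  obtain ⟨q, hq, hfresh⟩ := exists_isPath_pathAdd H (Fintype.card W) F huv
  exact ⟨_, _, _, _, hF, (pathAddInl_injective H _ _ _ F).comp hbr,
    hS.insert_map _ (pathAddInl_injective H _ _ _ F) q hq hfresh⟩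

lemma ClosedUnderPathAddition.exists_hasInternallyDisjointPaths {β : Type*} [Fintype β]
    [DecidableEq β] (hpa : ClosedUnderPathAddition 𝒢) {V : Type} [iV : Fintype V]
    {G : SimpleGraph V} (hG : 𝒢 V iV G) (hV : 1 < Fintype.card V) (S : Finset (β × β))
    (hS : ∀ p ∈ S, p.1 ≠ p.2) :
    ∃ (W : Type) (iW : Fintype W) (H : SimpleGraph W) (br : β → W),
      𝒢 W iW H ∧ Injective br ∧ HasInternallyDisjointPaths H br S := by
  induction S using Finset.induction_on with
  | empty =>
    obtain ⟨W, iW, H, hH, hcard⟩ := hpa.exists_le_card hG hV (Fintype.card β)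
    obtain ⟨e⟩ := Function.Embedding.nonempty_of_card_le hcard
    exact ⟨W, iW, H, e, hH, e.injective, hasInternallyDisjointPaths_empty H e⟩
  | insert a S _ ih =>
    obtain ⟨W, iW, H, br, hH, hbr, hpaths⟩ :=
      ih fun p hp => hS p (Finset.mem_insert_of_mem hp)
    exact hpa.exists_hasInternallyDisjointPaths_insert hH hbr hpaths
      (hS a (Finset.mem_insert_self a S))

end ClosedUnderPathAddition

theorem closedUnderPathAddition_contains_completeGraph_subdivision_general
    (𝒢 : ∀ V : Type, Fintype V → SimpleGraph V → Prop)
    (hpa : ClosedUnderPathAddition 𝒢)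
    (hne : ∃ (V : Type) (iV : Fintype V) (G : SimpleGraph V),
      𝒢 V iV G ∧ 2 ≤ @Fintype.card V iV)
    (k : ℕ) :
    ∃ (W : Type) (iW : Fintype W) (H : SimpleGraph W),
      𝒢 W iW H ∧ ContainsSubdivisionOfCompleteGraph H k := by
  obtain ⟨V, iV, G, hG, hV⟩ := hne
  obtain ⟨W, iW, H, br, hH, hbr, hpaths⟩ := hpa.exists_hasInternallyDisjointPaths hG hV
    {p : Fin k × Fin k | p.1 < p.2} fun p hp => (Finset.mem_filter.mp hp).2.ne
  exact ⟨W, iW, H, hH,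
    containsSubdivisionOfCompleteGraph_of_hasInternallyDisjointPaths hbr hpaths⟩

/-- If an isomorphism-closed class of finite simple graphs is closed
under path-addition and contains a graph with at least two vertices, then for every
`k ≥ 1` it contains a graph containing a subdivision of `K_k` as a subgraph. -/
theorem closedUnderPathAddition_contains_completeGraph_subdivision
    (𝒢 : ∀ V : Type, Fintype V → SimpleGraph V → Prop)
    (hiso : IsoClosed 𝒢) (hpa : ClosedUnderPathAddition 𝒢)
    (hne : ∃ (V : Type) (iV : Fintype V) (G : SimpleGraph V),
      𝒢 V iV G ∧ 2 ≤ @Fintype.card V iV)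
    (k : ℕ) (hk : 1 ≤ k) :
    ∃ (W : Type) (iW : Fintype W) (H : SimpleGraph W),
      𝒢 W iW H ∧ ContainsSubdivisionOfCompleteGraph H k :=
  closedUnderPathAddition_contains_completeGraph_subdivision_general 𝒢 hpa hne k
end
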